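/- arXiv:1610.06988 — 2 statements merged into one kernel-verified Lean document; each statement's English description precedes it below -/
import Mathlib

section
/- Let g > 0 and β < β_1 = ℏλ − (ℏ²/(4m))·(π/L)². Then there exists a GP solution φ on [0,L] with parameter β satisfying φ(x) > 0 for all x ∈ (0,L). (Existence of the positive ground-state quantum state on the first bifurcated branch.) -/
/-!
The solution is a rescaled Jacobi elliptic sine, `φ x = α * sn (ω * x | ν)`. The amplitude
`am = F(· | ν)⁻¹` inverts the elliptic integral of the first kind, and `sn = sin ∘ am` solves
`s'' = -(1 + ν) s + 2 ν s³`, vanishes at `0` and at `F(π | ν) = 2 K(ν)`, and is positive in between.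
With `A = ℏ² / (4m)`, `ω = F(π | ν) / L` and `g α² = 2 A ν ω²`, the rescaled function solves the
GP equation on `[0, L]` as soon as `A ω² (1 + ν) = ℏλ - β`, i.e. `F(π | ν)² (1 + ν) = L² (ℏλ - β) / A`.
The left side equals `π²` at `ν = 0` and is unbounded as `ν → 1`, and `β < β₁` says exactly that the
right side exceeds `π²`; the intermediate value theorem then yields `ν ∈ (0, 1)`.
-/
open Set MeasureTheory intervalIntegral Filter Topology

/-- `φ` is a GP solution on `[a,b]` with parameter `β`:
`φ` is continuous on `[a,b]`, twice continuously differentiable on `(a,b)`,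
satisfies `-(ℏ²/(4m))·φ'' + (β - ℏλ)·φ + g·φ³ = 0` on `(a,b)`,
and `φ a = φ b = 0`. -/
def IsGPSolution (ℏ m lam g a b β : ℝ) (φ : ℝ → ℝ) : Prop :=
  ContinuousOn φ (Set.Icc a b) ∧
  ContDiffOn ℝ 2 φ (Set.Ioo a b) ∧
  (∀ x ∈ Set.Ioo a b,
    -(ℏ ^ 2 / (4 * m)) * deriv (deriv φ) x + (β - ℏ * lam) * φ x + g * (φ x) ^ 3 = 0) ∧
  φ a = 0 ∧ φ b = 0

/-- The quantum critical points `β_k = ℏλ - (ℏ²/(4m))·(kπ/L)²`. -/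
noncomputable def betaCrit (ℏ m lam L : ℝ) (k : ℕ) : ℝ :=
  ℏ * lam - (ℏ ^ 2 / (4 * m)) * ((k : ℝ) * Real.pi / L) ^ 2

open Real

section

variable {f f' f'' : ℝ → ℝ}

theorem hasDerivAt_const_mul_comp_mul (hf : ∀ u, HasDerivAt f (f' u) u) (α ω x : ℝ) :
    HasDerivAt (fun x => α * f (ω * x)) (α * ω * f' (ω * x)) x := by
  have h := ((hf (ω * x)).comp x ((hasDerivAt_id x).const_mul ω)).const_mul α
  refine h.congr_deriv ?_
  ring

theorem deriv_deriv_const_mul_comp_mul (hf : ∀ u, HasDerivAt f (f' u) u)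
    (hf' : ∀ u, HasDerivAt f' (f'' u) u) (α ω x : ℝ) :
    deriv (deriv fun x => α * f (ω * x)) x = α * ω ^ 2 * f'' (ω * x) := by
  rw [funext fun x => (hasDerivAt_const_mul_comp_mul hf α ω x).deriv,
    (hasDerivAt_const_mul_comp_mul hf' (α * ω) ω x).deriv]
  ring

theorem contDiff_two_of_hasDerivAt (hf : ∀ u, HasDerivAt f (f' u) u)
    (hf' : ∀ u, HasDerivAt f' (f'' u) u) (hf'' : Continuous f'') : ContDiff ℝ 2 f := by
  have hd : deriv f = f' := funext fun u => (hf u).deriv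
  have hd' : deriv f' = f'' := funext fun u => (hf' u).deriv
  rw [show (2 : WithTop ℕ∞) = 1 + 1 from rfl, contDiff_succ_iff_deriv, hd, contDiff_one_iff_deriv,
    hd']
  exact ⟨fun u => (hf u).differentiableAt, by simp, fun u => (hf' u).differentiableAt, hf''⟩

end

noncomputable def ellipticDelta (m θ : ℝ) : ℝ := √(1 - m * sin θ ^ 2)

-- Legendre's form `F(θ | m)` in the parameter convention `m = k²`.
noncomputable def ellipticF (m θ : ℝ) : ℝ := ∫ t in 0..θ, (ellipticDelta m t)⁻¹

section Jacobi

variable {m : ℝ}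

theorem one_sub_mul_sin_sq_pos (hm : m < 1) (θ : ℝ) : 0 < 1 - m * sin θ ^ 2 := by
  rcases le_or_gt m 0 with h | h
  · nlinarith [sq_nonneg (sin θ)]
  · nlinarith [sin_sq_le_one θ]

theorem ellipticDelta_pos (hm : m < 1) (θ : ℝ) : 0 < ellipticDelta m θ :=
  sqrt_pos.2 (one_sub_mul_sin_sq_pos hm θ)

theorem ellipticDelta_sq (hm : m < 1) (θ : ℝ) : ellipticDelta m θ ^ 2 = 1 - m * sin θ ^ 2 :=
  sq_sqrt (one_sub_mul_sin_sq_pos hm θ).le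

theorem continuous_ellipticDelta (m : ℝ) : Continuous (ellipticDelta m) := by
  unfold ellipticDelta
  fun_prop

theorem periodic_ellipticDelta (m : ℝ) : Function.Periodic (ellipticDelta m) π := fun θ => by
  simp [ellipticDelta, sin_add_pi]

theorem continuous_inv_ellipticDelta (hm : m < 1) : Continuous fun θ => (ellipticDelta m θ)⁻¹ :=
  (continuous_ellipticDelta m).inv₀ fun θ => (ellipticDelta_pos hm θ).ne'

theorem hasDerivAt_ellipticF (hm : m < 1) (θ : ℝ) :
    HasDerivAt (ellipticF m) (ellipticDelta m θ)⁻¹ θ :=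
  ((continuous_inv_ellipticDelta hm).integral_hasStrictDerivAt 0 θ).hasDerivAt

theorem strictMono_ellipticF (hm : m < 1) : StrictMono (ellipticF m) :=
  strictMono_of_deriv_pos fun θ => by
    rw [(hasDerivAt_ellipticF hm θ).deriv]
    exact inv_pos.2 (ellipticDelta_pos hm θ)

theorem surjective_ellipticF (hm : m < 1) : Function.Surjective (ellipticF m) := by
  have hper := (periodic_ellipticDelta m).comp Inv.inv
  have hint := (continuous_inv_ellipticDelta hm).intervalIntegrable (μ := volume) 0 π
  have hpos θ := inv_pos.2 (ellipticDelta_pos hm θ)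
  exact Continuous.surjective
    (continuous_iff_continuousAt.2 fun θ => (hasDerivAt_ellipticF hm θ).continuousAt)
    (hper.tendsto_atTop_intervalIntegral_of_pos' hint hpos pi_pos)
    (hper.tendsto_atBot_intervalIntegral_of_pos' hint hpos pi_pos)

theorem ellipticF_zero_right : ellipticF m 0 = 0 := integral_same

theorem ellipticF_pi_pos (hm : m < 1) : 0 < ellipticF m π := by
  simpa [ellipticF_zero_right] using strictMono_ellipticF hm pi_pos

noncomputable def ellipticFOrderIso (hm : m < 1) : ℝ ≃o ℝ :=
  StrictMono.orderIsoOfSurjective (ellipticF m) (strictMono_ellipticF hm) (surjective_ellipticF hm)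

noncomputable def jacobiAm (hm : m < 1) (u : ℝ) : ℝ := (ellipticFOrderIso hm).symm u

noncomputable def jacobiSn (hm : m < 1) (u : ℝ) : ℝ := sin (jacobiAm hm u)

noncomputable def jacobiCn (hm : m < 1) (u : ℝ) : ℝ := cos (jacobiAm hm u)

noncomputable def jacobiDn (hm : m < 1) (u : ℝ) : ℝ := ellipticDelta m (jacobiAm hm u)

theorem ellipticF_jacobiAm (hm : m < 1) (u : ℝ) : ellipticF m (jacobiAm hm u) = u :=
  (ellipticFOrderIso hm).apply_symm_apply u

theorem jacobiAm_ellipticF (hm : m < 1) (θ : ℝ) : jacobiAm hm (ellipticF m θ) = θ :=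
  (ellipticFOrderIso hm).symm_apply_apply θ

theorem hasDerivAt_jacobiAm (hm : m < 1) (u : ℝ) : HasDerivAt (jacobiAm hm) (jacobiDn hm u) u := by
  have h := (hasDerivAt_ellipticF hm (jacobiAm hm u)).of_local_left_inverse
    (ellipticFOrderIso hm).symm.continuous.continuousAt
    (inv_ne_zero (ellipticDelta_pos hm _).ne') (Eventually.of_forall (ellipticF_jacobiAm hm))
  rwa [inv_inv] at h

theorem hasDerivAt_cos_mul_ellipticDelta (hm : m < 1) (θ : ℝ) :
    HasDerivAt (fun θ => cos θ * ellipticDelta m θ)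
      ((-(1 + m) * sin θ + 2 * m * sin θ ^ 3) / ellipticDelta m θ) θ := by
  have hsq : HasDerivAt (fun θ => 1 - m * sin θ ^ 2) (-(m * (2 * sin θ * cos θ))) θ := by
    simpa using (((hasDerivAt_sin θ).pow 2).const_mul m).const_sub 1
  have hΔ : HasDerivAt (ellipticDelta m) (-(m * (2 * sin θ * cos θ)) / (2 * ellipticDelta m θ)) θ :=
    hsq.sqrt (one_sub_mul_sin_sq_pos hm θ).ne'
  refine ((hasDerivAt_cos θ).mul hΔ).congr_deriv ?_
  have := (ellipticDelta_pos hm θ).ne'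
  field_simp
  linear_combination (-sin θ) * ellipticDelta_sq hm θ + (-m * sin θ) * sin_sq_add_cos_sq θ

theorem hasDerivAt_jacobiSn (hm : m < 1) (u : ℝ) :
    HasDerivAt (jacobiSn hm) (jacobiCn hm u * jacobiDn hm u) u :=
  (hasDerivAt_sin _).comp u (hasDerivAt_jacobiAm hm u)

theorem hasDerivAt_jacobiCn_mul_jacobiDn (hm : m < 1) (u : ℝ) :
    HasDerivAt (fun u => jacobiCn hm u * jacobiDn hm u)
      (-(1 + m) * jacobiSn hm u + 2 * m * jacobiSn hm u ^ 3) u := by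
  have h := (hasDerivAt_cos_mul_ellipticDelta hm _).comp u (hasDerivAt_jacobiAm hm u)
  rwa [jacobiDn, div_mul_cancel₀ _ (ellipticDelta_pos hm _).ne'] at h

theorem jacobiSn_zero (hm : m < 1) : jacobiSn hm 0 = 0 := by
  have h := jacobiAm_ellipticF hm 0
  rw [ellipticF_zero_right] at h
  rw [jacobiSn, h, sin_zero]

theorem jacobiSn_ellipticF_pi (hm : m < 1) : jacobiSn hm (ellipticF m π) = 0 := by
  rw [jacobiSn, jacobiAm_ellipticF, sin_pi]

theorem jacobiSn_pos (hm : m < 1) {u : ℝ} (hu : u ∈ Ioo 0 (ellipticF m π)) :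
    0 < jacobiSn hm u := by
  apply sin_pos_of_pos_of_lt_pi
  · rw [← (strictMono_ellipticF hm).lt_iff_lt, ellipticF_zero_right, ellipticF_jacobiAm]
    exact hu.1
  · rw [← (strictMono_ellipticF hm).lt_iff_lt, ellipticF_jacobiAm]
    exact hu.2

theorem contDiff_jacobiSn (hm : m < 1) : ContDiff ℝ 2 (jacobiSn hm) := by
  have hsn : Continuous (jacobiSn hm) :=
    continuous_iff_continuousAt.2 fun u => (hasDerivAt_jacobiSn hm u).continuousAt
  exact contDiff_two_of_hasDerivAt (hasDerivAt_jacobiSn hm) (hasDerivAt_jacobiCn_mul_jacobiDn hm)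
    (by fun_prop)

end Jacobi

theorem ellipticF_zero_left (θ : ℝ) : ellipticF 0 θ = θ := by
  simp [ellipticF, ellipticDelta]

theorem continuousOn_ellipticF_pi : ContinuousOn (fun m => ellipticF m π) (Iio 1) := by
  rw [continuousOn_iff_continuous_domRestrict]
  have h : Continuous fun p : Iio (1 : ℝ) × ℝ => (ellipticDelta p.1 p.2)⁻¹ := by
    refine Continuous.inv₀ ?_ fun p => (ellipticDelta_pos p.1.2 p.2).ne'
    unfold ellipticDelta
    fun_prop
  exact continuous_parametric_intervalIntegral_of_continuous' (μ := volume) h 0 π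

theorem ellipticDelta_one_sub_sq_le {ε t : ℝ} (hε : 0 ≤ ε) (ht : t ∈ Icc 0 (π / 2)) :
    ellipticDelta (1 - ε ^ 2) t ≤ ε + π / 2 - t := by
  have hcos : 0 ≤ cos t := cos_nonneg_of_mem_Icc ⟨by linarith [ht.1, pi_pos], ht.2⟩
  have hcos_le : cos t ≤ π / 2 - t := by
    simpa [sin_pi_div_two_sub] using sin_le (show 0 ≤ π / 2 - t by linarith [ht.2])
  -- `Δ² = cos² t + ε² sin² t ≤ (cos t + ε)²`
  rw [ellipticDelta, sqrt_le_left (by linarith [ht.2])]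
  nlinarith [sin_sq_add_cos_sq t, sin_sq_le_one t]

theorem log_one_add_le_ellipticF_pi {ε : ℝ} (hε : 0 < ε) :
    log (1 + π / (2 * ε)) ≤ ellipticF (1 - ε ^ 2) π := by
  have hm : 1 - ε ^ 2 < 1 := by nlinarith
  have hint := (continuous_inv_ellipticDelta hm).intervalIntegrable (μ := volume)
  calc log (1 + π / (2 * ε)) = ∫ t in 0..π / 2, (ε + π / 2 - t)⁻¹ := by
        rw [integral_comp_sub_left (fun x => x⁻¹), sub_zero, add_sub_cancel_right,
          integral_inv_of_pos hε (by positivity)]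
        congr 1
        field_simp
    _ ≤ ∫ t in 0..π / 2, (ellipticDelta (1 - ε ^ 2) t)⁻¹ := by
        refine integral_mono_on (by positivity) ?_ (hint _ _) fun t ht => ?_
        · refine (ContinuousOn.inv₀ (by fun_prop) fun t ht => ?_).intervalIntegrable
          rw [uIcc_of_le (by positivity)] at ht
          linarith [ht.2]
        · exact inv_anti₀ (ellipticDelta_pos hm t) (ellipticDelta_one_sub_sq_le hε.le ht)
    _ ≤ ellipticF (1 - ε ^ 2) π := by
        rw [ellipticF, ← integral_add_adjacent_intervals (hint 0 (π / 2)) (hint (π / 2) π)]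
        refine le_add_of_nonneg_right (integral_nonneg (by linarith [pi_pos]) fun t _ => ?_)
        exact (inv_pos.2 (ellipticDelta_pos hm t)).le

theorem exists_le_ellipticF_pi (R : ℝ) : ∃ m ∈ Ico (0 : ℝ) 1, R ≤ ellipticF m π := by
  -- chosen so that `1 + π / (2ε) = exp R + 3` and `ε ≤ π / 4 ≤ 1`
  set ε := π / (2 * (exp R + 2))
  have hε : 0 < ε := by positivity
  refine ⟨1 - ε ^ 2, ⟨?_, by nlinarith⟩, ?_⟩
  · have : ε ≤ 1 := by
      rw [div_le_one (by positivity)]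
      nlinarith [pi_le_four, exp_pos R]
    nlinarith
  · calc R = log (exp R) := (log_exp R).symm
      _ ≤ log (1 + π / (2 * ε)) := by
        refine log_le_log (exp_pos R) ?_
        have : π / (2 * ε) = exp R + 2 := by simp only [ε]; field_simp
        linarith
      _ ≤ ellipticF (1 - ε ^ 2) π := log_one_add_le_ellipticF_pi hε

theorem exists_ellipticF_pi_sq_mul_eq {T : ℝ} (hT : π ^ 2 < T) :
    ∃ m ∈ Ioo (0 : ℝ) 1, ellipticF m π ^ 2 * (1 + m) = T := by
  obtain ⟨m₁, hm₁, hF⟩ := exists_le_ellipticF_pi √T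
  have hH₀ : ellipticF 0 π ^ 2 * (1 + 0) = π ^ 2 := by rw [ellipticF_zero_left]; ring
  have hH₁ : T ≤ ellipticF m₁ π ^ 2 * (1 + m₁) := by
    have : T ≤ ellipticF m₁ π ^ 2 := by
      rwa [← sqrt_le_left (ellipticF_pi_pos hm₁.2).le]
    nlinarith [hm₁.1]
  have hcont : ContinuousOn (fun m => ellipticF m π ^ 2 * (1 + m)) (Icc 0 m₁) :=
    ((continuousOn_ellipticF_pi.mono fun m hm => hm.2.trans_lt hm₁.2).pow 2).mul (by fun_prop)
  obtain ⟨m, hm, hHm⟩ := intermediate_value_Icc hm₁.1 hcont ⟨hH₀.le.trans hT.le, hH₁⟩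
  refine ⟨m, ⟨hm.1.lt_of_ne ?_, hm.2.trans_lt hm₁.2⟩, hHm⟩
  rintro rfl
  exact hT.ne (hH₀.symm.trans hHm)

/-- existence of the positive ground-state quantum state on the
first bifurcated branch, for `g > 0` and `β < β₁`. -/
theorem stmt_14 (ℏ m lam L g : ℝ) (hℏ : 0 < ℏ) (hm : 0 < m) (hL : 0 < L)
    (hg : 0 < g) (β : ℝ) (hβ : β < betaCrit ℏ m lam L 1) :
    ∃ φ : ℝ → ℝ, IsGPSolution ℏ m lam g 0 L β φ ∧
      ∀ x ∈ Set.Ioo (0:ℝ) L, 0 < φ x := by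
  rw [betaCrit, Nat.cast_one, one_mul, div_pow] at hβ
  set A := ℏ ^ 2 / (4 * m)
  have hA : 0 < A := by positivity
  have hT : π ^ 2 < L ^ 2 * (ℏ * lam - β) / A := by
    rw [lt_div_iff₀ hA]
    calc π ^ 2 * A = L ^ 2 * (A * (π ^ 2 / L ^ 2)) := by field_simp
      _ < L ^ 2 * (ℏ * lam - β) := by gcongr; linarith
  obtain ⟨ν, ⟨hν₀, hν₁⟩, hν⟩ := exists_ellipticF_pi_sq_mul_eq hT
  set ω := ellipticF ν π / L
  set α := √(2 * A * ν * ω ^ 2 / g)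
  have hω : 0 < ω := div_pos (ellipticF_pi_pos hν₁) hL
  have hωL : ω * L = ellipticF ν π := div_mul_cancel₀ _ hL.ne'
  have hfreq : A * ω ^ 2 * (1 + ν) = ℏ * lam - β := by
    rw [← hωL, mul_pow, eq_div_iff hA.ne'] at hν
    field_simp at hν ⊢
    linear_combination hν
  have hamp : g * α ^ 2 = 2 * A * ν * ω ^ 2 := by
    rw [sq_sqrt (by positivity)]
    field_simp
  have hφ : ContDiff ℝ 2 fun x => α * jacobiSn hν₁ (ω * x) :=
    contDiff_const.mul ((contDiff_jacobiSn hν₁).comp (contDiff_const.mul contDiff_id))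
  refine ⟨fun x => α * jacobiSn hν₁ (ω * x), ⟨?_, ?_, fun x _ => ?_, ?_, ?_⟩, fun x hx => ?_⟩
  · exact hφ.continuous.continuousOn
  · exact hφ.contDiffOn
  · rw [deriv_deriv_const_mul_comp_mul (hasDerivAt_jacobiSn hν₁)
      (hasDerivAt_jacobiCn_mul_jacobiDn hν₁)]
    linear_combination (α * jacobiSn hν₁ (ω * x)) * hfreq
      + (α * jacobiSn hν₁ (ω * x) ^ 3) * hamp
  · simp [jacobiSn_zero]
  · simp [hωL, jacobiSn_ellipticF_pi]
  · refine mul_pos (sqrt_pos.2 (by positivity)) (jacobiSn_pos hν₁ ⟨mul_pos hω hx.1, ?_⟩)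
    rw [← hωL]
    exact mul_lt_mul_of_pos_left hx.2 hω
end

section
/- Let g ∈ ℝ, let β : [0,1] → ℝ be continuous, and let Φ : [0,1] × [0,L] → ℝ be such that Φ and its partial derivative ∂Φ/∂x are continuous on [0,1] × [0,L], and for every t ∈ [0,1] the function Φ(t,·) is a GP solution on [0,L] with parameter β(t) that is not identically zero. Then each Φ(t,·) has only finitely many interior zeros, and the number of interior zeros of Φ(0,·) equals the number of interior zeros of Φ(1,·). (Invariance of the nodal count along a continuous family of nonzero stationary states; this is the mechanism behind Theorem 4.2(1), that branches bifurcating from distinct critical points β_i and β_j cannot be deformed into one another and hence do not intersect.) -/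
open Set MeasureTheory intervalIntegral Filter Topology

/-!
A nontrivial GP solution has only simple zeros: if `φ x₀ = φ' x₀ = 0`, the energy `φ² + φ'²`
satisfies `|E'| ≤ K E` (the cubic term is a bounded coefficient times `φ`), so it vanishes
identically. Simple zeros of a `C¹` function on a compact interval are isolated, hence finitely
many, and their number is stable: a function `C¹`-close to `f`, with the same Dirichlet data, is
injective on a small window around each zero of `f`, changes sign across each interior window and
does not vanish off the windows. Continuity of `Φ` and `∂ₓΦ` on the compact rectangle makes
`t ↦ Φ t` continuous for the `C¹` distance, so the nodal count is locally constant, hence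
constant on the connected interval `[0, 1]`.
-/

open Metric

lemma eq_zero_of_abs_deriv_le_mul {E E' : ℝ → ℝ} {K a b x₀ : ℝ}
    (hE : ContinuousOn E (Icc a b)) (hE' : ∀ x ∈ Ioo a b, HasDerivAt E (E' x) x)
    (hbound : ∀ x ∈ Ioo a b, |E' x| ≤ K * E x) (hnonneg : ∀ x ∈ Icc a b, 0 ≤ E x)
    (hx₀ : x₀ ∈ Icc a b) (h₀ : E x₀ = 0) : ∀ x ∈ Icc a b, E x = 0 := by
  have hweight : ∀ k : ℝ, ∀ x ∈ Ioo a b, HasDerivWithinAt (fun y => E y * Real.exp (k * y))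
      ((E' x + k * E x) * Real.exp (k * x)) (Ioo a b) x := fun k x hx => by
    have := (hE' x hx).mul (((hasDerivAt_id x).const_mul k).exp)
    exact (this.congr_deriv (by simp only [id_eq, mul_one]; ring)).hasDerivWithinAt
  have hcont : ∀ k : ℝ, ContinuousOn (fun y => E y * Real.exp (k * y)) (Icc a b) := fun k =>
    hE.mul (by fun_prop)
  -- `E e^{Kx}` is monotone and `E e^{-Kx}` antitone, so `E` cannot leave `0` in either direction.
  have hmono : MonotoneOn (fun y => E y * Real.exp (K * y)) (Icc a b) :=
    monotoneOn_of_hasDerivWithinAt_nonneg (convex_Icc a b) (hcont K)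
      (by simpa only [interior_Icc] using hweight K) fun x hx => by
        rw [interior_Icc] at hx
        have := (neg_abs_le (E' x)).trans' (neg_le_neg (hbound x hx))
        exact mul_nonneg (by linarith) (Real.exp_pos _).le
  have hanti : AntitoneOn (fun y => E y * Real.exp (-K * y)) (Icc a b) :=
    antitoneOn_of_hasDerivWithinAt_nonpos (convex_Icc a b) (hcont (-K))
      (by simpa only [interior_Icc] using hweight (-K)) fun x hx => by
        rw [interior_Icc] at hx
        have := (le_abs_self (E' x)).trans (hbound x hx)
        exact mul_nonpos_of_nonpos_of_nonneg (by linarith) (Real.exp_pos _).le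
  intro x hx
  refine le_antisymm ?_ (hnonneg x hx)
  rcases le_total x x₀ with hle | hle
  · have := hmono hx hx₀ hle
    simp only [h₀, zero_mul] at this
    exact nonpos_of_mul_nonpos_left this (Real.exp_pos _)
  · have := hanti hx₀ hx hle
    simp only [h₀, zero_mul] at this
    exact nonpos_of_mul_nonpos_left this (Real.exp_pos _)

lemma eq_zero_of_hasDerivAt_deriv_eq_mul {φ V : ℝ → ℝ} {C a b x₀ : ℝ}
    (hφ : ContinuousOn φ (Icc a b)) (hφ' : ContinuousOn (deriv φ) (Icc a b))
    (h₁ : ∀ x ∈ Ioo a b, HasDerivAt φ (deriv φ x) x)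
    (h₂ : ∀ x ∈ Ioo a b, HasDerivAt (deriv φ) (V x * φ x) x) (hV : ∀ x ∈ Ioo a b, |V x| ≤ C)
    (hx₀ : x₀ ∈ Icc a b) (h₀ : φ x₀ = 0) (h₀' : deriv φ x₀ = 0) : ∀ x ∈ Icc a b, φ x = 0 := by
  have henergy := eq_zero_of_abs_deriv_le_mul (E := fun x => φ x ^ 2 + deriv φ x ^ 2)
    (E' := fun x => 2 * φ x * deriv φ x * (1 + V x)) (K := 1 + C)
    ((hφ.pow 2).add (hφ'.pow 2))
    (fun x hx => ((h₁ x hx).pow 2).add ((h₂ x hx).pow 2) |>.congr_deriv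
      (by simp only [Nat.cast_ofNat, Nat.add_one_sub_one, pow_one]; ring))
    (fun x hx => by
      have hCV := hV x hx
      have hAMGM : 2 * |φ x| * |deriv φ x| ≤ φ x ^ 2 + deriv φ x ^ 2 := by
        nlinarith [sq_nonneg (|φ x| - |deriv φ x|), sq_abs (φ x), sq_abs (deriv φ x)]
      calc |2 * φ x * deriv φ x * (1 + V x)| = 2 * |φ x| * |deriv φ x| * |1 + V x| := by
            simp [abs_mul]
        _ ≤ (φ x ^ 2 + deriv φ x ^ 2) * (1 + C) := by
            gcongr
            exact (abs_add_le _ _).trans (by simp [hCV])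
        _ = _ := by ring)
    (fun x _ => by positivity) hx₀ (by simp [h₀, h₀'])
  intro x hx
  have := henergy x hx
  nlinarith [sq_nonneg (φ x), sq_nonneg (deriv φ x)]

namespace IsGPSolution

variable {ℏ m lam g a b β : ℝ} {φ : ℝ → ℝ}

lemma hasDerivAt (hφ : IsGPSolution ℏ m lam g a b β φ) {x : ℝ} (hx : x ∈ Ioo a b) :
    HasDerivAt φ (deriv φ x) x :=
  ((hφ.2.1.differentiableOn (by norm_num)).differentiableAt
    (isOpen_Ioo.mem_nhds hx)).hasDerivAt

lemma hasDerivAt_deriv (hℏ : ℏ ≠ 0) (hm : m ≠ 0) (hφ : IsGPSolution ℏ m lam g a b β φ)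
    {x : ℝ} (hx : x ∈ Ioo a b) :
    HasDerivAt (deriv φ) (4 * m / ℏ ^ 2 * (β - ℏ * lam + g * φ x ^ 2) * φ x) x := by
  have hdiff : DifferentiableAt ℝ (deriv φ) x :=
    ((hφ.2.1.deriv_of_isOpen isOpen_Ioo (m := 1) (by norm_num)).differentiableOn
      one_ne_zero).differentiableAt (isOpen_Ioo.mem_nhds hx)
  refine hdiff.hasDerivAt.congr_deriv ?_
  have hode := hφ.2.2.1 x hx
  field_simp at hode ⊢
  linear_combination -hode

lemma eq_zero_of_deriv_eq_zero (hℏ : ℏ ≠ 0) (hm : m ≠ 0)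
    (hφ : IsGPSolution ℏ m lam g a b β φ) (hφ' : ContinuousOn (deriv φ) (Icc a b)) {x₀ : ℝ}
    (hx₀ : x₀ ∈ Icc a b) (h₀ : φ x₀ = 0) (h₀' : deriv φ x₀ = 0) : ∀ x ∈ Icc a b, φ x = 0 := by
  obtain ⟨C, hC⟩ := isCompact_Icc.exists_bound_of_continuousOn
    (((hφ.1.pow 2).const_smul g).const_add (β - ℏ * lam) |>.const_smul (4 * m / ℏ ^ 2))
  exact eq_zero_of_hasDerivAt_deriv_eq_mul hφ.1 hφ' (fun x hx => hφ.hasDerivAt hx)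
    (fun x hx => hφ.hasDerivAt_deriv hℏ hm hx) (fun x hx => hC x (Ioo_subset_Icc_self hx))
    hx₀ h₀ h₀'

lemma deriv_ne_zero_of_eq_zero (hℏ : ℏ ≠ 0) (hm : m ≠ 0)
    (hφ : IsGPSolution ℏ m lam g a b β φ) (hφ' : ContinuousOn (deriv φ) (Icc a b))
    (hne : ∃ x ∈ Icc a b, φ x ≠ 0) {x : ℝ} (hx : x ∈ Icc a b) (h₀ : φ x = 0) :
    deriv φ x ≠ 0 := fun h₀' =>
  let ⟨y, hy, hφy⟩ := hne
  hφy (hφ.eq_zero_of_deriv_eq_zero hℏ hm hφ' hx h₀ h₀' y hy)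

end IsGPSolution

lemma ContinuousWithinAt.eventually_forall_closedBall_dist_lt {X Y : Type*} [PseudoMetricSpace X]
    [PseudoMetricSpace Y] {h : X → Y} {s : Set X} {z : X} (hh : ContinuousWithinAt h s z)
    {r : ℝ} (hr : 0 < r) :
    ∀ᶠ ε in 𝓝[>] (0 : ℝ), ∀ x ∈ s ∩ closedBall z ε, dist (h x) (h z) < r := by
  obtain ⟨δ, hδ, hball⟩ := Metric.continuousWithinAt_iff.1 hh r hr
  filter_upwards [Ioo_mem_nhdsGT hδ] with ε hε x hx
  exact hball hx.1 ((mem_closedBall.1 hx.2).trans_lt hε.2)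

lemma injOn_of_abs_deriv_sub_lt {D : Set ℝ} (hD : Convex ℝ D) {f : ℝ → ℝ}
    (hf : ContinuousOn f D) {d : ℝ} (hd : ∀ x ∈ interior D, |deriv f x - d| < |d|) :
    InjOn f D := by
  rcases le_or_gt 0 d with h | h
  · refine (strictMonoOn_of_deriv_pos hD hf fun x hx => ?_).injOn
    have := hd x hx
    rw [abs_of_nonneg h] at this
    linarith [neg_abs_le (deriv f x - d)]
  · refine (strictAntiOn_of_deriv_neg hD hf fun x hx => ?_).injOn
    have := hd x hx
    rw [abs_of_neg h] at this
    linarith [le_abs_self (deriv f x - d)]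

lemma IsCompact.exists_pos_le_norm {X E : Type*} [TopologicalSpace X] [NormedAddCommGroup E]
    {K : Set X} (hK : IsCompact K) {f : X → E} (hf : ContinuousOn f K)
    (h : ∀ x ∈ K, f x ≠ 0) : ∃ μ > 0, ∀ x ∈ K, μ ≤ ‖f x‖ := by
  rcases K.eq_empty_or_nonempty with rfl | hne
  · exact ⟨1, one_pos, by simp⟩
  obtain ⟨x₀, hx₀, hmin⟩ := hK.exists_isMinOn hne hf.norm
  exact ⟨‖f x₀‖, norm_pos_iff.2 (h x₀ hx₀), fun x hx => hmin hx⟩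

lemma exists_mem_Icc_eq_zero_of_injOn {f g : ℝ → ℝ} {p q z : ℝ} (hz : z ∈ Ioo p q)
    (hf : ContinuousOn f (Icc p q)) (hinj : InjOn f (Icc p q)) (hfz : f z = 0)
    (hg : ContinuousOn g (Icc p q)) (hgp : |g p - f p| < |f p|) (hgq : |g q - f q| < |f q|) :
    ∃ x ∈ Icc p q, g x = 0 := by
  have hpq : p ≤ q := (hz.1.trans hz.2).le
  have hzI : z ∈ Icc p q := Ioo_subset_Icc_self hz
  have hfpq : f p * f q < 0 := by
    rcases hf.strictMonoOn_of_injOn_Icc' hpq hinj with hmono | hanti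
    · exact mul_neg_of_neg_of_pos (hfz ▸ hmono (left_mem_Icc.2 hpq) hzI hz.1)
        (hfz ▸ hmono hzI (right_mem_Icc.2 hpq) hz.2)
    · exact mul_neg_of_pos_of_neg (hfz ▸ hanti (left_mem_Icc.2 hpq) hzI hz.1)
        (hfz ▸ hanti hzI (right_mem_Icc.2 hpq) hz.2)
  have hsign : ∀ y, |g y - f y| < |f y| → 0 < g y * f y := fun y hy => by
    have h1 : -(|g y - f y| * |f y|) ≤ (g y - f y) * f y := abs_mul (g y - f y) (f y) ▸ neg_abs_le _
    have h2 : 0 < |f y| * (|f y| - |g y - f y|) :=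
      mul_pos ((abs_nonneg _).trans_lt hy) (sub_pos.2 hy)
    linarith [abs_mul_abs_self (f y), show g y * f y = f y * f y + (g y - f y) * f y by ring]
  have hgpq : g p * g q < 0 := by
    nlinarith [mul_pos (hsign p hgp) (hsign q hgq)]
  have h0 : (0 : ℝ) ∈ uIcc (g p) (g q) := by
    rcases mul_neg_iff.1 hgpq with h | h
    · exact mem_uIcc.2 (Or.inr ⟨h.2.le, h.1.le⟩)
    · exact mem_uIcc.2 (Or.inl ⟨h.1.le, h.2.le⟩)
  obtain ⟨x, hx, hgx⟩ := intermediate_value_uIcc (by rwa [uIcc_of_le hpq]) h0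
  exact ⟨x, by rwa [uIcc_of_le hpq] at hx, hgx⟩

lemma finite_zeros_of_deriv_ne_zero {f : ℝ → ℝ} {a b : ℝ} (hf : ContinuousOn f (Icc a b))
    (hf' : ContinuousOn (deriv f) (Icc a b))
    (hsimple : ∀ x ∈ Icc a b, f x = 0 → deriv f x ≠ 0) : {x ∈ Icc a b | f x = 0}.Finite := by
  have hclosed : IsClosed {x ∈ Icc a b | f x = 0} :=
    hf.preimage_isClosed_of_isClosed isClosed_Icc isClosed_singleton
  refine (isCompact_Icc.of_isClosed_subset hclosed fun x hx => hx.1).finite ?_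
  refine isDiscrete_iff_forall_mem_exists_isOpen.2 fun z hz => ?_
  have hdz := abs_pos.2 (hsimple z hz.1 hz.2)
  obtain ⟨ε, hwin, hε⟩ :=
    ((hf' z hz.1).eventually_forall_closedBall_dist_lt hdz).and self_mem_nhdsWithin |>.exists
  have hinj : InjOn f (Icc a b ∩ closedBall z ε) :=
    injOn_of_abs_deriv_sub_lt ((convex_Icc a b).inter (convex_closedBall z ε))
      (hf.mono inter_subset_left) fun x hx => hwin x (interior_subset hx)
  refine ⟨ball z ε, isOpen_ball, subset_antisymm (fun x hx => ?_) ?_⟩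
  · exact hinj ⟨hx.2.1, ball_subset_closedBall hx.1⟩
      ⟨hz.1, mem_closedBall_self (le_of_lt hε)⟩ (hx.2.2.trans hz.2.symm)
  · exact singleton_subset_iff.2 ⟨mem_ball_self hε, hz⟩

lemma closedBall_subset_Ioo {a b z ε : ℝ} (hz : z ∈ Ioo a b) (ha : ε < dist z a)
    (hb : ε < dist z b) : closedBall z ε ⊆ Ioo a b := by
  rw [Real.dist_eq, abs_of_pos (sub_pos.2 hz.1)] at ha
  rw [Real.dist_eq, abs_of_neg (sub_neg.2 hz.2)] at hb
  rw [Real.closedBall_eq_Icc]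
  exact Icc_subset_Ioo (by linarith) (by linarith)

lemma Set.Finite.eventually_lt_dist {X : Type*} [MetricSpace X] {s : Set X} (hs : s.Finite) :
    ∀ᶠ ε in 𝓝[>] (0 : ℝ), ∀ z ∈ s, ∀ z' ∈ s, z ≠ z' → 2 * ε < dist z z' := by
  refine hs.eventually_all.2 fun z _ => hs.eventually_all.2 fun z' _ => ?_
  rcases eq_or_ne z z' with rfl | hne
  · exact Eventually.of_forall fun _ h => absurd rfl h
  · filter_upwards [Ioo_mem_nhdsGT (half_pos (dist_pos.2 hne))] with ε hε _
    linarith [hε.2]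

lemma exists_pos_le_abs_of_le_dist_zeros {f : ℝ → ℝ} {a b ε : ℝ}
    (hf : ContinuousOn f (Icc a b)) (hε : 0 < ε) :
    ∃ μ > 0, ∀ x ∈ Icc a b, (∀ z ∈ Icc a b, f z = 0 → ε ≤ dist x z) → μ ≤ |f x| := by
  set K := Icc a b ∩ ⋂ z ∈ {x ∈ Icc a b | f x = 0}, (ball z ε)ᶜ
  have hK : IsCompact K :=
    isCompact_Icc.inter_right (isClosed_biInter fun z _ => isOpen_ball.isClosed_compl)
  obtain ⟨μ, hμ, hμK⟩ := hK.exists_pos_le_norm (hf.mono inter_subset_left)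
    fun x hx hfx => mem_iInter₂.1 hx.2 x ⟨hx.1, hfx⟩ (mem_ball_self hε)
  refine ⟨μ, hμ, fun x hx hfar => hμK x ⟨hx, mem_iInter₂.2 fun z hz => ?_⟩⟩
  simpa using hfar z hz.1 hz.2

lemma ncard_zeros_eq_of_windows {f g : ℝ → ℝ} {a b ε : ℝ}
    (hfa : f a = 0) (hfb : f b = 0) (hga : g a = 0) (hgb : g b = 0)
    (hsep : ∀ z ∈ Icc a b, ∀ z' ∈ Icc a b, f z = 0 → f z' = 0 → z ≠ z' → 2 * ε < dist z z')
    (hinj : ∀ z ∈ Icc a b, f z = 0 → InjOn g (Icc a b ∩ closedBall z ε))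
    (hnear : ∀ x ∈ Icc a b, g x = 0 → ∃ z ∈ Icc a b, f z = 0 ∧ dist x z ≤ ε)
    (hcross : ∀ z ∈ Ioo a b, f z = 0 → ∃ x ∈ closedBall z ε, g x = 0) :
    {x ∈ Ioo a b | g x = 0}.ncard = {x ∈ Ioo a b | f x = 0}.ncard := by
  choose! ζ hζε hζ0 using hcross
  have hwindow : ∀ z ∈ Ioo a b, f z = 0 → closedBall z ε ⊆ Ioo a b := by
    intro z hz hfz
    have hab : a ≤ b := (hz.1.trans hz.2).le
    have ha := hsep z (Ioo_subset_Icc_self hz) a (left_mem_Icc.2 hab) hfz hfa hz.1.ne'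
    have hb := hsep z (Ioo_subset_Icc_self hz) b (right_mem_Icc.2 hab) hfz hfb hz.2.ne
    exact closedBall_subset_Ioo hz (by linarith [dist_nonneg (x := z) (y := a)])
      (by linarith [dist_nonneg (x := z) (y := b)])
  symm
  refine ncard_congr (fun z _ => ζ z)
    (fun z hz => ⟨hwindow z hz.1 hz.2 (hζε z hz.1 hz.2), hζ0 z hz.1 hz.2⟩) ?_ ?_
  · intro z z' hz hz' hζ
    by_contra hne
    have hfar := hsep z (Ioo_subset_Icc_self hz.1) z' (Ioo_subset_Icc_self hz'.1) hz.2 hz'.2 hne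
    have h₁ := mem_closedBall'.1 (hζε z hz.1 hz.2)
    have h₂ := mem_closedBall.1 (hζε z' hz'.1 hz'.2)
    have := dist_triangle z (ζ z) z'
    rw [hζ] at this h₁
    linarith
  · intro x hx
    obtain ⟨z, hzI, hfz, hxz⟩ := hnear x (Ioo_subset_Icc_self hx.1) hx.2
    have hxW : x ∈ Icc a b ∩ closedBall z ε := ⟨Ioo_subset_Icc_self hx.1, hxz⟩
    have hzW : z ∈ Icc a b ∩ closedBall z ε := ⟨hzI, mem_closedBall_self (dist_nonneg.trans hxz)⟩
    -- the windows around the zeros `a` and `b` of `g` contain no other zero of `g`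
    have hz : z ∈ Ioo a b := by
      refine ⟨hzI.1.lt_of_ne ?_, hzI.2.lt_of_ne ?_⟩
      · rintro rfl
        exact hx.1.1.ne' (hinj _ hzI hfz hxW hzW (hx.2.trans hga.symm))
      · rintro rfl
        exact hx.1.2.ne (hinj _ hzI hfz hxW hzW (hx.2.trans hgb.symm))
    refine ⟨z, ⟨hz, hfz⟩, hinj z hzI hfz ?_ hxW ((hζ0 z hz hfz).trans hx.2.symm)⟩
    exact ⟨Ioo_subset_Icc_self (hwindow z hz hfz (hζε z hz hfz)), hζε z hz hfz⟩

lemma exists_pos_ncard_zeros_eq_of_abs_sub_lt {f : ℝ → ℝ} {a b : ℝ}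
    (hf : ContinuousOn f (Icc a b)) (hf' : ContinuousOn (deriv f) (Icc a b))
    (hfa : f a = 0) (hfb : f b = 0) (hsimple : ∀ x ∈ Icc a b, f x = 0 → deriv f x ≠ 0) :
    ∃ η > 0, ∀ g : ℝ → ℝ, ContinuousOn g (Icc a b) → g a = 0 → g b = 0 →
      (∀ x ∈ Icc a b, |g x - f x| < η) → (∀ x ∈ Icc a b, |deriv g x - deriv f x| < η) →
      {x ∈ Ioo a b | g x = 0}.ncard = {x ∈ Ioo a b | f x = 0}.ncard := by
  set Z := {x ∈ Icc a b | f x = 0}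
  have hZ : Z.Finite := finite_zeros_of_deriv_ne_zero hf hf' hsimple
  have hpos : ∀ z ∈ Z, 0 < |deriv f z| / 2 := fun z hz =>
    half_pos (abs_pos.2 (hsimple z hz.1 hz.2))
  obtain ⟨ε, ⟨hsep, hclose⟩, hε⟩ := (hZ.eventually_lt_dist.and (hZ.eventually_all.2 fun z hz =>
    (hf' z hz.1).eventually_forall_closedBall_dist_lt (hpos z hz))).and
    self_mem_nhdsWithin |>.exists
  obtain ⟨μ, hμ, hμf⟩ := exists_pos_le_abs_of_le_dist_zeros hf hε
  obtain ⟨η, ⟨hημ, hηf'⟩, hη⟩ := ((eventually_le_nhds hμ).and (hZ.eventually_all.2 fun z hz =>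
    eventually_le_nhds (hpos z hz))).filter_mono nhdsWithin_le_nhds |>.and
    (self_mem_nhdsWithin (s := Ioi 0)) |>.exists
  have hinj : ∀ h : ℝ → ℝ, ContinuousOn h (Icc a b) →
      (∀ x ∈ Icc a b, |deriv h x - deriv f x| < η) →
      ∀ z ∈ Z, InjOn h (Icc a b ∩ closedBall z ε) := by
    intro h hh hh' z hz
    refine injOn_of_abs_deriv_sub_lt (d := deriv f z)
      ((convex_Icc a b).inter (convex_closedBall z ε)) (hh.mono inter_subset_left) fun x hx => ?_
    replace hx := interior_subset hx
    have := hclose z hz x hx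
    rw [Real.dist_eq] at this
    calc |deriv h x - deriv f z| ≤ |deriv h x - deriv f x| + |deriv f x - deriv f z| :=
          abs_sub_le _ _ _
      _ < |deriv f z| / 2 + |deriv f z| / 2 :=
          add_lt_add ((hh' x hx.1).trans_le (hηf' z hz)) this
      _ = |deriv f z| := add_halves _
  refine ⟨η, hη, fun g hg hga hgb hgf hg'f => ncard_zeros_eq_of_windows hfa hfb hga hgb
    (fun z hz z' hz' hfz hfz' => hsep z ⟨hz, hfz⟩ z' ⟨hz', hfz'⟩)
    (fun z hz hfz => hinj g hg hg'f z ⟨hz, hfz⟩) (fun x hx hgx => ?_) (fun z hz hfz => ?_)⟩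
  · by_contra! hfar
    have := (hgf x hx).trans_le (hημ.trans (hμf x hx fun z hz hfz => (hfar z hz hfz).le))
    rw [hgx, zero_sub, abs_neg] at this
    exact this.false
  · have hzZ : z ∈ Z := ⟨Ioo_subset_Icc_self hz, hfz⟩
    have hab : a ≤ b := (hz.1.trans hz.2).le
    have hW : Icc (z - ε) (z + ε) ⊆ Icc a b := by
      rw [← Real.closedBall_eq_Icc]
      refine (closedBall_subset_Ioo hz ?_ ?_).trans Ioo_subset_Icc_self
      · linarith [hsep z hzZ a ⟨left_mem_Icc.2 hab, hfa⟩ hz.1.ne']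
      · linarith [hsep z hzZ b ⟨right_mem_Icc.2 hab, hfb⟩ hz.2.ne]
    have hend : ∀ y ∈ Icc a b, dist y z = ε → |g y - f y| < |f y| := by
      refine fun y hy hyz => (hgf y hy).trans_le (hημ.trans (hμf y hy fun z' hz' hfz' => ?_))
      rcases eq_or_ne z z' with rfl | hne
      · exact hyz.ge
      · linarith [hsep z hzZ z' ⟨hz', hfz'⟩ hne, dist_triangle_left z z' y]
    obtain ⟨x, hx, hgx⟩ := exists_mem_Icc_eq_zero_of_injOn (z := z) ⟨by linarith, by linarith⟩
      (hf.mono hW) ((hinj f hf (fun _ _ => by simpa using hη) z hzZ).mono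
        (subset_inter hW Real.closedBall_eq_Icc.ge)) hfz (hg.mono hW)
      (hend _ (hW (left_mem_Icc.2 (by linarith))) (by simp [abs_of_pos hε]))
      (hend _ (hW (right_mem_Icc.2 (by linarith))) (by simp [abs_of_pos hε]))
    exact ⟨x, Real.closedBall_eq_Icc ▸ hx, hgx⟩

lemma continuousOn_ncard_zeros {X : Type*} [TopologicalSpace X] {S : Set X} {Φ : X → ℝ → ℝ}
    {a b : ℝ} (hΦ : ContinuousOn (fun p : X × ℝ => Φ p.1 p.2) (S ×ˢ Icc a b))
    (hΦ' : ContinuousOn (fun p : X × ℝ => deriv (Φ p.1) p.2) (S ×ˢ Icc a b))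
    (hbdry : ∀ t ∈ S, Φ t a = 0 ∧ Φ t b = 0)
    (hsimple : ∀ t ∈ S, ∀ x ∈ Icc a b, Φ t x = 0 → deriv (Φ t) x ≠ 0) :
    ContinuousOn (fun t => {x ∈ Ioo a b | Φ t x = 0}.ncard) S := by
  intro t ht
  obtain ⟨η, hη, hstable⟩ := exists_pos_ncard_zeros_eq_of_abs_sub_lt (hΦ.uncurry_left t ht)
    (hΦ'.uncurry_left (f := fun t x => deriv (Φ t) x) t ht) (hbdry t ht).1 (hbdry t ht).2
    (hsimple t ht)
  obtain ⟨v, hv, hvΦ⟩ :=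
    isCompact_Icc.mem_uniformity_of_prod hΦ ht (dist_mem_uniformity hη)
  obtain ⟨w, hw, hwΦ'⟩ := isCompact_Icc.mem_uniformity_of_prod (f := fun t x => deriv (Φ t) x)
    hΦ' ht (dist_mem_uniformity hη)
  rw [ContinuousWithinAt, nhds_discrete, tendsto_pure]
  filter_upwards [hv, hw, self_mem_nhdsWithin] with s hsv hsw hs
  exact hstable (Φ s) (hΦ.uncurry_left s hs) (hbdry s hs).1 (hbdry s hs).2
    (fun x hx => by simpa [Real.dist_eq] using hvΦ s hsv x hx)
    (fun x hx => by simpa [Real.dist_eq] using hwΦ' s hsw x hx)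

theorem stmt_15_general (ℏ m lam L g : ℝ) (hℏ : 0 < ℏ) (hm : 0 < m)
    (β : ℝ → ℝ)
    (Φ : ℝ → ℝ → ℝ)
    (hΦcont : ContinuousOn (fun p : ℝ × ℝ => Φ p.1 p.2)
      (Set.Icc (0:ℝ) 1 ×ˢ Set.Icc (0:ℝ) L))
    (hΦderiv : ContinuousOn (fun p : ℝ × ℝ => deriv (Φ p.1) p.2)
      (Set.Icc (0:ℝ) 1 ×ˢ Set.Icc (0:ℝ) L))
    (hsol : ∀ t ∈ Set.Icc (0:ℝ) 1, IsGPSolution ℏ m lam g 0 L (β t) (Φ t))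
    (hne : ∀ t ∈ Set.Icc (0:ℝ) 1, ∃ x ∈ Set.Icc (0:ℝ) L, Φ t x ≠ 0) :
    (∀ t ∈ Set.Icc (0:ℝ) 1, {x ∈ Set.Ioo (0:ℝ) L | Φ t x = 0}.Finite) ∧
    {x ∈ Set.Ioo (0:ℝ) L | Φ 0 x = 0}.ncard =
      {x ∈ Set.Ioo (0:ℝ) L | Φ 1 x = 0}.ncard := by
  have hΦ' : ∀ t ∈ Icc (0:ℝ) 1, ContinuousOn (deriv (Φ t)) (Icc 0 L) := fun t ht =>
    hΦderiv.uncurry_left (f := fun t x => deriv (Φ t) x) t ht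
  have hsimple : ∀ t ∈ Icc (0:ℝ) 1, ∀ x ∈ Icc 0 L, Φ t x = 0 → deriv (Φ t) x ≠ 0 :=
    fun t ht x hx => (hsol t ht).deriv_ne_zero_of_eq_zero hℏ.ne' hm.ne' (hΦ' t ht) (hne t ht) hx
  refine ⟨fun t ht => ?_, ?_⟩
  · exact (finite_zeros_of_deriv_ne_zero (hsol t ht).1 (hΦ' t ht) (hsimple t ht)).subset
      fun x hx => ⟨Ioo_subset_Icc_self hx.1, hx.2⟩
  · exact isPreconnected_Icc.constant (continuousOn_ncard_zeros hΦcont hΦderiv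
      (fun t ht => ⟨(hsol t ht).2.2.2.1, (hsol t ht).2.2.2.2⟩) hsimple)
      (left_mem_Icc.2 zero_le_one) (right_mem_Icc.2 zero_le_one)

/-- invariance of the nodal count along a continuous family of
nonzero stationary states (the mechanism behind Theorem 4.2(1)). -/
theorem stmt_15 (ℏ m lam L g : ℝ) (hℏ : 0 < ℏ) (hm : 0 < m) (hL : 0 < L)
    (β : ℝ → ℝ) (hβ : ContinuousOn β (Set.Icc 0 1))
    (Φ : ℝ → ℝ → ℝ)
    (hΦcont : ContinuousOn (fun p : ℝ × ℝ => Φ p.1 p.2)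
      (Set.Icc (0:ℝ) 1 ×ˢ Set.Icc (0:ℝ) L))
    (hΦderiv : ContinuousOn (fun p : ℝ × ℝ => deriv (Φ p.1) p.2)
      (Set.Icc (0:ℝ) 1 ×ˢ Set.Icc (0:ℝ) L))
    (hsol : ∀ t ∈ Set.Icc (0:ℝ) 1, IsGPSolution ℏ m lam g 0 L (β t) (Φ t))
    (hne : ∀ t ∈ Set.Icc (0:ℝ) 1, ∃ x ∈ Set.Icc (0:ℝ) L, Φ t x ≠ 0) :
    (∀ t ∈ Set.Icc (0:ℝ) 1, {x ∈ Set.Ioo (0:ℝ) L | Φ t x = 0}.Finite) ∧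
    {x ∈ Set.Ioo (0:ℝ) L | Φ 0 x = 0}.ncard =
      {x ∈ Set.Ioo (0:ℝ) L | Φ 1 x = 0}.ncard :=
  stmt_15_general ℏ m lam L g hℏ hm β Φ hΦcont hΦderiv hsol hne
end
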